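/- Let Ω = {z_1,…,z_M} ⊂ ℂ^d be pairwise distinct points and n ≥ M. Then the ideal generated by the polynomials of max-degree at most n vanishing on Ω equals the full vanishing ideal: ⟨ker 𝒜_n⟩ = I(Ω). -/

import Mathlib

/-!
Lagrange polynomials `L j`, each a product of `M - 1` affine forms, one separating `z j` from
each other point, have total degree at most `M - 1 < n`. Hence `1 - ∑ j, L j` and
`(X i - z j i) * L j` are vanishing polynomials of degree at most `n`. Since `p - p(z j)` lies in
the ideal generated by the `X i - z j i`, every `p ∈ I(Ω)` has `p * L j` in the span, and so
`p = p * (1 - ∑ j, L j) + ∑ j, p * L j` is in the span too.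
-/

namespace MvPolynomial

variable {R K σ ι : Type*}

theorem sub_C_eval_mem_span_X_sub_C [CommRing R] (a : σ → R) (p : MvPolynomial σ R) :
    p - C (eval a p) ∈ Ideal.span (Set.range fun i => X i - C (a i)) := by
  induction p using MvPolynomial.induction_on with
  | C c => simp
  | add p q hp hq =>
    rw [map_add, C_add, add_sub_add_comm]
    exact add_mem hp hq
  | mul_X p i hp =>
    have key : p * X i - C (eval a (p * X i)) =
        (p - C (eval a p)) * X i + C (eval a p) * (X i - C (a i)) := by
      simp only [map_mul, eval_X]
      ring
    rw [key]
    exact add_mem (Ideal.mul_mem_right _ _ hp)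
      (Ideal.mul_mem_left _ _ (Ideal.subset_span ⟨i, rfl⟩))

variable [Field K]

theorem vanishingIdeal_range_le [Fintype ι] {z : ι → σ → K} {J : Ideal (MvPolynomial σ K)}
    (L : ι → MvPolynomial σ K) (h_one_sub_sum : 1 - ∑ j, L j ∈ J)
    (h_X_sub_C_mul : ∀ i j, (X i - C (z j i)) * L j ∈ J) :
    vanishingIdeal K (Set.range z) ≤ J := by
  intro p hp
  have h_mul : ∀ j, p * L j ∈ J := by
    intro j
    have h_colon :
        Ideal.span (Set.range fun i => X i - C (z j i)) ≤ J.colon (Ideal.span {L j}) :=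
      Ideal.span_le.mpr <| Set.range_subset_iff.mpr fun i =>
        Ideal.mem_colon_span_singleton.mpr (h_X_sub_C_mul i j)
    have h_sub := Ideal.mem_colon_span_singleton.mp (h_colon (sub_C_eval_mem_span_X_sub_C (z j) p))
    rwa [show eval (z j) p = 0 from hp _ ⟨j, rfl⟩, C_0, sub_zero] at h_sub
  have h_decomp : p = p * (1 - ∑ j, L j) + ∑ j, p * L j := by
    rw [← Finset.mul_sum]; ring
  rw [h_decomp]
  exact add_mem (Ideal.mul_mem_left _ _ h_one_sub_sum) (sum_mem fun j _ => h_mul j)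

theorem totalDegree_X_sub_C_le (i : σ) (c : K) : (X i - C c : MvPolynomial σ K).totalDegree ≤ 1 :=
  (totalDegree_sub_C_le _ _).trans (totalDegree_X i).le

theorem exists_totalDegree_le_one_eval_eq_one_eval_eq_zero {a b : σ → K} (hab : a ≠ b) :
    ∃ ℓ : MvPolynomial σ K, ℓ.totalDegree ≤ 1 ∧ eval a ℓ = 1 ∧ eval b ℓ = 0 := by
  obtain ⟨i, hi⟩ := Function.ne_iff.mp hab
  refine ⟨C (a i - b i)⁻¹ * (X i - C (b i)), ?_, ?_, ?_⟩
  · calc _ ≤ (C (a i - b i)⁻¹ : MvPolynomial σ K).totalDegree + (X i - C (b i)).totalDegree :=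
          totalDegree_mul _ _
      _ ≤ 1 := by rw [totalDegree_C, zero_add]; exact totalDegree_X_sub_C_le i (b i)
  · simp [inv_mul_cancel₀ (sub_ne_zero.mpr hi)]
  · simp

theorem exists_lagrangeBasis [Fintype ι] [DecidableEq ι] {z : ι → σ → K}
    (hz : Function.Injective z) :
    ∃ L : ι → MvPolynomial σ K, (∀ j, (L j).totalDegree ≤ Fintype.card ι - 1) ∧
      ∀ j k, eval (z k) (L j) = if k = j then 1 else 0 := by
  choose ℓ hℓ_deg hℓ_one hℓ_zero using fun (j : ι) (k : {k // k ≠ j}) =>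
    exists_totalDegree_le_one_eval_eq_one_eval_eq_zero (hz.ne k.2.symm)
  refine ⟨fun j => ∏ k, ℓ j k, fun j => ?_, fun j k => ?_⟩
  · calc _ ≤ ∑ k, (ℓ j k).totalDegree := totalDegree_finsetProd _ _
      _ ≤ ∑ _k : {k // k ≠ j}, 1 := Finset.sum_le_sum fun k _ => hℓ_deg j k
      _ = Fintype.card ι - 1 := by simp [Fintype.card_subtype_compl]
  · split_ifs with hkj
    · subst hkj
      simp [map_prod, hℓ_one]
    · rw [map_prod]
      exact Finset.prod_eq_zero (Finset.mem_univ ⟨k, hkj⟩) (hℓ_zero j ⟨k, hkj⟩)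

end MvPolynomial

open MvPolynomial

/-- For `M` pairwise distinct points `z 1, …, z M ∈ ℂ^d` and `n ≥ M`,
the ideal generated by the polynomials of max-degree at most `n` vanishing on
`Ω = {z 1, …, z M}` equals the full vanishing ideal of `Ω`. -/
theorem span_ker_evaluation_eq_vanishingIdeal
    (d M n : ℕ) (hn : M ≤ n) (z : Fin M → Fin d → ℂ) (hz : Function.Injective z) :
    Ideal.span {p : MvPolynomial (Fin d) ℂ |
        (∀ i, p.degreeOf i ≤ n) ∧ ∀ j, MvPolynomial.eval (z j) p = 0} =
      MvPolynomial.vanishingIdeal ℂ (Set.range z) := by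
  refine le_antisymm (Ideal.span_le.mpr ?_) ?_
  · rintro p ⟨-, hp⟩ _ ⟨j, rfl⟩
    simpa using hp j
  set S := {p : MvPolynomial (Fin d) ℂ |
    (∀ i, p.degreeOf i ≤ n) ∧ ∀ j, MvPolynomial.eval (z j) p = 0}
  have mem_span {p : MvPolynomial (Fin d) ℂ} (hdeg : p.totalDegree ≤ n)
      (hp : ∀ j, eval (z j) p = 0) : p ∈ Ideal.span S :=
    Ideal.subset_span ⟨fun i => (degreeOf_le_totalDegree p i).trans hdeg, hp⟩
  obtain ⟨L, hL_deg, hL_eval⟩ := exists_lagrangeBasis hz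
  rw [Fintype.card_fin] at hL_deg
  refine vanishingIdeal_range_le L (mem_span ?_ fun k => ?_) fun i j => mem_span ?_ fun k => ?_
  · exact (totalDegree_sub _ _).trans <| max_le (by simp) <|
      totalDegree_finsetSum_le fun j _ => (hL_deg j).trans (by omega)
  · simp [hL_eval]
  · have := j.pos
    exact (totalDegree_mul _ _).trans <|
      (add_le_add (totalDegree_X_sub_C_le i (z j i)) (hL_deg j)).trans (by omega)
  · by_cases hkj : k = j
    · simp [hkj]
    · simp [hL_eval, hkj]
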